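/- arXiv:cs/0510095 — 8 statements merged into one kernel-verified Lean document; each statement's English description precedes it below -/
import Mathlib

section
/- Let 0 < ρ < 1 and let D be a 2×2 matrix with diagonal entries d₁, d₂ > 0 and off-diagonal entries θ√(d₁d₂), where θ = (√((1-ρ²)² + 4ρ²d₁d₂) - (1-ρ²)) / (2ρ√(d₁d₂)). Then det D = 2d₁d₂ / β(d₁,d₂), where β(d₁,d₂) = 1 + √(1 + 4ρ²d₁d₂/(1-ρ²)²). -/
open Matrix Real

/-
With `a = 1 - ρ²` and `r = √(a² + 4ρ²d₁d₂)`, the off-diagonal entry is `(r - a) / (2ρ)` and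
`β = (a + r) / a`. Since `(r - a)(r + a) = 4ρ²d₁d₂`, the square of the off-diagonal entry is
`d₁d₂ (r - a) / (r + a)`, so `det D = d₁d₂ · 2a / (a + r) = 2d₁d₂ / β`.
-/

lemma one_add_sqrt_one_add_div_sq {a c : ℝ} (ha : 0 < a) :
    1 + √(1 + c / a ^ 2) = (a + √(a ^ 2 + c)) / a := by
  have h : 1 + c / a ^ 2 = (a ^ 2 + c) / a ^ 2 := by field_simp
  rw [h, sqrt_div' _ (sq_nonneg a), sqrt_sq ha.le]
  field_simp

lemma sub_sq_div_two_mul_of_sq_eq_sq_add {a r ρ p : ℝ} (hρ : ρ ≠ 0) (har : 0 < a + r)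
    (hr : r ^ 2 = a ^ 2 + 4 * ρ ^ 2 * p) :
    p - ((r - a) / (2 * ρ)) ^ 2 = 2 * p * a / (a + r) := by
  field_simp
  linear_combination (a - r) * hr

theorem stmt2 (ρ d₁ d₂ θ β : ℝ) (hρ : 0 < ρ) (hρ1 : ρ < 1)
    (hd₁ : 0 < d₁) (hd₂ : 0 < d₂)
    (hθ : θ = (Real.sqrt ((1 - ρ ^ 2) ^ 2 + 4 * ρ ^ 2 * d₁ * d₂) - (1 - ρ ^ 2)) /
      (2 * ρ * Real.sqrt (d₁ * d₂)))
    (hβ : β = 1 + Real.sqrt (1 + 4 * ρ ^ 2 * d₁ * d₂ / (1 - ρ ^ 2) ^ 2))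
    (D : Matrix (Fin 2) (Fin 2) ℝ)
    (hD : D = !![d₁, θ * Real.sqrt (d₁ * d₂); θ * Real.sqrt (d₁ * d₂), d₂]) :
    D.det = 2 * d₁ * d₂ / β := by
  set a := 1 - ρ ^ 2
  set r := √(a ^ 2 + 4 * ρ ^ 2 * d₁ * d₂)
  have ha : 0 < a := by nlinarith
  have hp : 0 < d₁ * d₂ := mul_pos hd₁ hd₂
  have hr : r ^ 2 = a ^ 2 + 4 * ρ ^ 2 * (d₁ * d₂) := by
    rw [sq_sqrt (by positivity)]
    ring
  have hoff : θ * √(d₁ * d₂) = (r - a) / (2 * ρ) := by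
    rw [hθ]
    field_simp [(sqrt_pos.2 hp).ne']
  have hβ' : β = (a + r) / a := by rw [hβ, one_add_sqrt_one_add_div_sq ha]
  calc D.det = d₁ * d₂ - ((r - a) / (2 * ρ)) ^ 2 := by
        rw [hD, det_fin_two_of, hoff]
        ring
    _ = 2 * (d₁ * d₂) * a / (a + r) :=
        sub_sq_div_two_mul_of_sq_eq_sq_add hρ.ne' (by positivity) hr
    _ = 2 * d₁ * d₂ / β := by
        rw [hβ']
        field_simp
end

section
/- Let 0 < ρ < 1 and d₁, d₂ > 0. There exists a 2×2 positive definite matrix D with D⁻¹ = K_y⁻¹ + Λ for some diagonal positive semidefinite Λ, with top-left entry d₁ and bottom-right entry d₂, if and only if max(d₁,d₂) ≤ min(1, ρ²·min(d₁,d₂) + 1 - ρ²). -/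
/-!
Write `D = !![d₁, c; c, d₂]` and `δ = det D > 0`. By the explicit inverse of a `2 × 2` matrix,
`D⁻¹ - K⁻¹` is diagonal iff `c (1 - ρ²) = ρ δ`, and its diagonal is nonnegative iff
`δ ≤ (1 - ρ²) min d₁ d₂`. With `s = δ / (1 - ρ²)`, so that `c = ρ s`, realizability becomes:
`d₁ d₂ = s (1 - ρ² + ρ² s)` for some `0 < s ≤ min d₁ d₂`. As the right side increases with `s`,
the intermediate value theorem shows this holds iff `max d₁ d₂ ≤ ρ² min d₁ d₂ + 1 - ρ²`, a bound
which already forces `max d₁ d₂ ≤ 1`.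
-/

open Matrix

namespace Matrix

theorem inv_fin_two_of {K : Type*} [Field K] (a b c d : K) :
    (!![a, b; c, d])⁻¹ = (a * d - b * c)⁻¹ • !![d, -b; -c, a] := by
  rw [inv_def, adjugate_fin_two_of, det_fin_two_of, Ring.inverse_eq_inv']

theorem posDef_fin_two_of {a b c : ℝ} (ha : 0 < a) (hdet : 0 < a * c - b ^ 2) :
    (!![a, b; b, c]).PosDef := by
  refine .of_dotProduct_mulVec_pos ?_ fun x hx => ?_
  · ext i j
    fin_cases i <;> fin_cases j <;> simp
  · have hform : star x ⬝ᵥ (!![a, b; b, c] *ᵥ x)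
        = a * x 0 ^ 2 + 2 * b * x 0 * x 1 + c * x 1 ^ 2 := by
      simp [dotProduct, mulVec, Fin.sum_univ_two]
      ring
    rw [hform]
    by_cases h1 : x 1 = 0
    · have h0 : x 0 ≠ 0 := fun h0 => hx (by ext i; fin_cases i <;> simp [h0, h1])
      simp only [h1, mul_zero, add_zero, zero_pow two_ne_zero]
      positivity
    · have hsq : a * (a * x 0 ^ 2 + 2 * b * x 0 * x 1 + c * x 1 ^ 2)
          = (a * x 0 + b * x 1) ^ 2 + (a * c - b ^ 2) * x 1 ^ 2 := by ring
      exact pos_of_mul_pos_right (hsq ▸ by positivity) ha.le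

theorem exists_eq_add_diagonal_nonneg_iff {R : Type*} [Ring R] [PartialOrder R]
    [IsOrderedAddMonoid R] (A B : Matrix (Fin 2) (Fin 2) R) :
    (∃ l₁ l₂ : R, 0 ≤ l₁ ∧ 0 ≤ l₂ ∧ A = B + diagonal ![l₁, l₂]) ↔
      A 0 1 = B 0 1 ∧ A 1 0 = B 1 0 ∧ B 0 0 ≤ A 0 0 ∧ B 1 1 ≤ A 1 1 := by
  constructor
  · rintro ⟨l₁, l₂, hl₁, hl₂, rfl⟩
    simp [hl₁, hl₂]
  · rintro ⟨h01, h10, h00, h11⟩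
    refine ⟨A 0 0 - B 0 0, A 1 1 - B 1 1, sub_nonneg.2 h00, sub_nonneg.2 h11, ?_⟩
    ext i j
    fin_cases i <;> fin_cases j <;> simp [h01, h10]

theorem exists_inv_eq_inv_add_diagonal_iff {ρ d₁ d₂ c : ℝ} (hρ : ρ ^ 2 < 1)
    (hdet : 0 < d₁ * d₂ - c ^ 2) :
    (∃ l₁ l₂ : ℝ, 0 ≤ l₁ ∧ 0 ≤ l₂ ∧
        (!![d₁, c; c, d₂])⁻¹ = (!![1, ρ; ρ, 1])⁻¹ + diagonal ![l₁, l₂]) ↔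
      c * (1 - ρ ^ 2) = ρ * (d₁ * d₂ - c ^ 2) ∧
        d₁ * d₂ - c ^ 2 ≤ (1 - ρ ^ 2) * d₂ ∧ d₁ * d₂ - c ^ 2 ≤ (1 - ρ ^ 2) * d₁ := by
  have hρ' : 0 < 1 - ρ ^ 2 := by linarith
  rw [exists_eq_add_diagonal_nonneg_iff, inv_fin_two_of, inv_fin_two_of]
  simp only [smul_apply, of_apply, cons_val', cons_val_zero, cons_val_one, empty_val',
    cons_val_fin_one, smul_eq_mul, mul_one, mul_neg, neg_inj, one_pow, ← sq, and_self_left,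
    inv_mul_eq_div]
  rw [div_eq_div_iff hdet.ne' hρ'.ne', le_div_iff₀ hdet, le_div_iff₀ hdet,
    inv_mul_le_iff₀ hρ', inv_mul_le_iff₀ hρ']

theorem exists_posDef_inv_eq_inv_add_diagonal_iff {ρ d₁ d₂ : ℝ} (hρ : ρ ^ 2 < 1) :
    (∃ (D : Matrix (Fin 2) (Fin 2) ℝ) (l₁ l₂ : ℝ),
        D.PosDef ∧ 0 ≤ l₁ ∧ 0 ≤ l₂ ∧
        D⁻¹ = (!![1, ρ; ρ, 1])⁻¹ + diagonal ![l₁, l₂] ∧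
        D 0 0 = d₁ ∧ D 1 1 = d₂) ↔
      ∃ s, 0 < s ∧ s ≤ min d₁ d₂ ∧ s * (1 - ρ ^ 2 + ρ ^ 2 * s) = d₁ * d₂ := by
  have hρ' : 0 < 1 - ρ ^ 2 := by linarith
  constructor
  · rintro ⟨D, l₁, l₂, hD, hl₁, hl₂, hinv, rfl, rfl⟩
    have hsymm : D 1 0 = D 0 1 := hD.isHermitian.apply 0 1
    have hdet : 0 < D 0 0 * D 1 1 - D 0 1 ^ 2 := by
      simpa [det_fin_two, hsymm, sq] using hD.det_pos
    rw [eta_fin_two D, hsymm] at hinv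
    obtain ⟨hoff, h₁, h₂⟩ :=
      (exists_inv_eq_inv_add_diagonal_iff hρ hdet).1 ⟨l₁, l₂, hl₁, hl₂, hinv⟩
    -- With `s = det D / (1 - ρ²)`, `hoff` reads `D 0 1 = ρ s`, and `d₁ d₂ = (ρ s)² + det D`.
    refine ⟨(D 0 0 * D 1 1 - D 0 1 ^ 2) / (1 - ρ ^ 2), by positivity,
      le_min ((div_le_iff₀ hρ').2 (by linarith)) ((div_le_iff₀ hρ').2 (by linarith)), ?_⟩
    field_simp
    linear_combination -(D 0 1 * (1 - ρ ^ 2) + ρ * (D 0 0 * D 1 1 - D 0 1 ^ 2)) * hoff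
  · rintro ⟨s, hs, hsmin, hprod⟩
    obtain ⟨hs₁, hs₂⟩ := le_min_iff.1 hsmin
    have hdet : 0 < d₁ * d₂ - (ρ * s) ^ 2 := by nlinarith
    obtain ⟨l₁, l₂, hl₁, hl₂, hinv⟩ := (exists_inv_eq_inv_add_diagonal_iff hρ hdet).2
      ⟨by linear_combination ρ * hprod, by nlinarith, by nlinarith⟩
    exact ⟨_, l₁, l₂, posDef_fin_two_of (by linarith) hdet, hl₁, hl₂, hinv, rfl, rfl⟩

end Matrix

theorem exists_mul_one_sub_add_mul_eq_iff {q m p : ℝ} (hq₀ : 0 ≤ q) (hq₁ : q ≤ 1)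
    (hm : 0 < m) (hp : 0 < p) :
    (∃ s, 0 < s ∧ s ≤ m ∧ s * (1 - q + q * s) = m * p) ↔ p ≤ q * m + 1 - q := by
  constructor
  · rintro ⟨s, hs, hsm, hsp⟩
    -- `s ↦ s (1 - q + q s)` is increasing on `[0, ∞)`.
    have : m * p ≤ m * (q * m + 1 - q) := by
      nlinarith [mul_nonneg (sub_nonneg.2 hsm) (by nlinarith : 0 ≤ 1 - q + q * (m + s))]
    exact le_of_mul_le_mul_left this hm
  · intro hpm
    have hcont : ContinuousOn (fun s : ℝ => s * (1 - q + q * s)) (Set.Icc 0 m) := by fun_prop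
    obtain ⟨s, ⟨hs₀, hsm⟩, hsp⟩ := intermediate_value_Icc hm.le hcont
      (show m * p ∈ Set.Icc (0 * (1 - q + q * 0)) (m * (1 - q + q * m)) from
        ⟨by simp only [zero_mul]; positivity, by nlinarith⟩)
    refine ⟨s, lt_of_le_of_ne hs₀ ?_, hsm, hsp⟩
    rintro rfl
    simp only [zero_mul] at hsp
    nlinarith

theorem stmt3 (ρ d₁ d₂ : ℝ) (hρ : 0 < ρ) (hρ1 : ρ < 1)
    (hd₁ : 0 < d₁) (hd₂ : 0 < d₂)
    (K : Matrix (Fin 2) (Fin 2) ℝ) (hK : K = !![1, ρ; ρ, 1]) :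
    (∃ (D : Matrix (Fin 2) (Fin 2) ℝ) (l₁ l₂ : ℝ),
        D.PosDef ∧ 0 ≤ l₁ ∧ 0 ≤ l₂ ∧
        D⁻¹ = K⁻¹ + Matrix.diagonal ![l₁, l₂] ∧
        D 0 0 = d₁ ∧ D 1 1 = d₂) ↔
      max d₁ d₂ ≤ min 1 (ρ ^ 2 * min d₁ d₂ + 1 - ρ ^ 2) := by
  subst hK
  have hρ2 : ρ ^ 2 < 1 := by nlinarith
  rw [exists_posDef_inv_eq_inv_add_diagonal_iff hρ2, ← min_mul_max d₁ d₂,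
    exists_mul_one_sub_add_mul_eq_iff (sq_nonneg ρ) hρ2.le (lt_min hd₁ hd₂)
      (lt_max_of_lt_left hd₁), le_min_iff, iff_and_self]
  intro h
  -- `min ≤ max` turns the bound into `(1 - ρ²) max ≤ 1 - ρ²`.
  nlinarith [min_le_max (a := d₁) (b := d₂)]
end

section
/- Let 0 < ρ < 1 and define for μ₁, μ₂ > 0: SNR₁ = (ρ/(1-ρ²))(μ₁/μ₂ + ρ), SNR₂ = (ρ/(1-ρ²))(μ₂/μ₁ + ρ), and a_j = √(SNR_j/(1+SNR_j)) for j = 1,2. Then a₁·a₂ = ρ, and both a₁ and a₂ lie in the open interval (ρ, 1). -/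
/-!
With `t = μ₁ / μ₂`, clearing the factor `1 - ρ²` gives
`SNR₁ / (1 + SNR₁) = ρ q` and `SNR₂ / (1 + SNR₂) = ρ / q` for the Möbius value
`q = (t + ρ) / (1 + ρ t)`, since swapping `μ₁, μ₂` replaces `t` by `t⁻¹` and `q` by `q⁻¹`.
Hence `a₁ a₂ = √(ρ²) = ρ`, and `ρ < a_j < 1` amounts to `ρ < q < ρ⁻¹`, which holds for every `t > 0`.
-/

namespace SNR

open Real Set

variable {ρ t : ℝ}

noncomputable def snr (ρ t : ℝ) : ℝ := ρ / (1 - ρ ^ 2) * (t + ρ)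

noncomputable def mobius (ρ t : ℝ) : ℝ := (t + ρ) / (1 + ρ * t)

lemma snr_div_one_add_snr (hρ : 1 - ρ ^ 2 ≠ 0) (ht : 1 + ρ * t ≠ 0) :
    snr ρ t / (1 + snr ρ t) = ρ * mobius ρ t := by
  have h : 1 + snr ρ t = (1 + ρ * t) / (1 - ρ ^ 2) := by
    unfold snr; field_simp; ring
  rw [h, snr, mobius]
  field_simp

lemma mobius_inv (ht : t ≠ 0) : mobius ρ t⁻¹ = (mobius ρ t)⁻¹ := by
  unfold mobius
  field_simp

lemma mobius_mem_Ioo (hρ : 0 < ρ) (hρ1 : ρ < 1) (ht : 0 < t) :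
    mobius ρ t ∈ Ioo ρ ρ⁻¹ := by
  have hden : 0 < 1 + ρ * t := by positivity
  constructor
  · rw [mobius, lt_div_iff₀ hden]
    nlinarith [mul_pos ht (show 0 < 1 - ρ ^ 2 by nlinarith)]
  · have hρinv : ρ < ρ⁻¹ := by nlinarith [mul_inv_cancel₀ hρ.ne']
    rw [mobius, div_lt_iff₀ hden, mul_add, mul_one, inv_mul_cancel_left₀ hρ.ne']
    linarith

lemma sqrt_mul_mem_Ioo {q : ℝ} (hρ : 0 < ρ) (hq : q ∈ Ioo ρ ρ⁻¹) :
    √(ρ * q) ∈ Ioo ρ 1 := by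
  constructor
  · calc ρ = √(ρ * ρ) := (sqrt_mul_self hρ.le).symm
      _ < √(ρ * q) := sqrt_lt_sqrt (by positivity) (by gcongr; exact hq.1)
  · calc √(ρ * q) < √(ρ * ρ⁻¹) := sqrt_lt_sqrt (by nlinarith [hq.1]) (by gcongr; exact hq.2)
      _ = 1 := by rw [mul_inv_cancel₀ hρ.ne', sqrt_one]

lemma sqrt_mul_mul_sqrt_mul_inv {q : ℝ} (hρ : 0 ≤ ρ) (hq : 0 < q) :
    √(ρ * q) * √(ρ * q⁻¹) = ρ := by
  rw [← sqrt_mul (by positivity), mul_mul_mul_comm, mul_inv_cancel₀ hq.ne', mul_one,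
    sqrt_mul_self hρ]

end SNR

open SNR in
theorem stmt6 (ρ μ₁ μ₂ : ℝ) (hρ : 0 < ρ) (hρ1 : ρ < 1)
    (hμ₁ : 0 < μ₁) (hμ₂ : 0 < μ₂)
    (SNR₁ SNR₂ a₁ a₂ : ℝ)
    (hS₁ : SNR₁ = ρ / (1 - ρ ^ 2) * (μ₁ / μ₂ + ρ))
    (hS₂ : SNR₂ = ρ / (1 - ρ ^ 2) * (μ₂ / μ₁ + ρ))
    (ha₁ : a₁ = Real.sqrt (SNR₁ / (1 + SNR₁)))
    (ha₂ : a₂ = Real.sqrt (SNR₂ / (1 + SNR₂))) :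
    a₁ * a₂ = ρ ∧ a₁ ∈ Set.Ioo ρ 1 ∧ a₂ ∈ Set.Ioo ρ 1 := by
  set t := μ₁ / μ₂
  have ht : 0 < t := div_pos hμ₁ hμ₂
  have hρ2 : 1 - ρ ^ 2 ≠ 0 := by nlinarith
  have hq := mobius_mem_Ioo hρ hρ1 ht
  have hq' := mobius_mem_Ioo hρ hρ1 (inv_pos.mpr ht)
  have hx₁ : SNR₁ / (1 + SNR₁) = ρ * mobius ρ t :=
    hS₁ ▸ snr_div_one_add_snr hρ2 (by positivity)
  have hx₂ : SNR₂ / (1 + SNR₂) = ρ * (mobius ρ t)⁻¹ := by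
    rw [← mobius_inv ht.ne', hS₂, ← inv_div μ₁ μ₂]
    exact snr_div_one_add_snr hρ2 (by positivity)
  rw [mobius_inv ht.ne'] at hq'
  rw [ha₁, ha₂, hx₁, hx₂]
  exact ⟨sqrt_mul_mul_sqrt_mul_inv hρ.le (hρ.trans hq.1),
    sqrt_mul_mem_Ioo hρ hq, sqrt_mul_mem_Ioo hρ hq'⟩
end

section
/- Let 0 < ρ < 1, μ₁,μ₂ > 0 with SNR₁ = (ρ/(1-ρ²))(μ₁/μ₂ + ρ), SNR₂ = (ρ/(1-ρ²))(μ₂/μ₁ + ρ), γ = 1/(1 + SNR₁ + SNR₂), a_j = √(SNR_j/(1+SNR_j)). If μ₁μ₂ = (γ²/ρ)·SNR₁·SNR₂, then [a₁ a₂]·K_y⁻¹ = [γ·SNR₁/a₁, γ·SNR₂/a₂] = [μ₁, μ₂], where K_y = [[1,ρ],[ρ,1]]. -/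
/-! Write `P = μ₁ + ρ μ₂` and `Q = μ₂ + ρ μ₁`. Then `SNR₁ = ρ P / ((1 - ρ²) μ₂)`,
`1 + SNR₁ = Q / ((1 - ρ²) μ₂)` and `γ = (1 - ρ²) μ₁ μ₂ / (P Q)`, so the normalization condition
says exactly `P Q = ρ`. Consequently `a₁ = √(ρ P / Q) = P` and `a₂ = Q`, that is
`[a₁ a₂] = [μ₁ μ₂] K_y`, and `γ SNR₁ = ρ μ₁ / Q = P μ₁`. -/

open Matrix

noncomputable def snr (ρ x y : ℝ) : ℝ := ρ / (1 - ρ ^ 2) * (x / y + ρ)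

noncomputable def snrGain (ρ x y : ℝ) : ℝ := 1 / (1 + snr ρ x y + snr ρ y x)

section snr

variable {ρ x y : ℝ}

lemma snr_eq_div (hρ : 1 - ρ ^ 2 ≠ 0) (hy : y ≠ 0) :
    snr ρ x y = ρ * (x + ρ * y) / ((1 - ρ ^ 2) * y) := by
  unfold snr; field_simp

lemma one_add_snr_eq_div (hρ : 1 - ρ ^ 2 ≠ 0) (hy : y ≠ 0) :
    1 + snr ρ x y = (y + ρ * x) / ((1 - ρ ^ 2) * y) := by
  rw [snr_eq_div hρ hy]; field_simp; ring

lemma snr_div_one_add_snr (hρ : 1 - ρ ^ 2 ≠ 0) (hy : y ≠ 0) (hQ : y + ρ * x ≠ 0) :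
    snr ρ x y / (1 + snr ρ x y) = ρ * (x + ρ * y) / (y + ρ * x) := by
  rw [one_add_snr_eq_div hρ hy, snr_eq_div hρ hy]; field_simp

lemma snrGain_comm (ρ x y : ℝ) : snrGain ρ x y = snrGain ρ y x := by
  unfold snrGain; rw [add_right_comm]

lemma snrGain_eq_div (hρ : 1 - ρ ^ 2 ≠ 0) (hx : x ≠ 0) (hy : y ≠ 0) :
    snrGain ρ x y = (1 - ρ ^ 2) * x * y / ((x + ρ * y) * (y + ρ * x)) := by
  unfold snrGain; rw [snr_eq_div hρ hx, snr_eq_div hρ hy]; field_simp; ring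

lemma snrGain_sq_div_mul_snr_mul_snr (hρ : 1 - ρ ^ 2 ≠ 0) (hρ0 : ρ ≠ 0) (hx : x ≠ 0)
    (hy : y ≠ 0) :
    snrGain ρ x y ^ 2 / ρ * snr ρ x y * snr ρ y x
      = ρ * x * y / ((x + ρ * y) * (y + ρ * x)) := by
  rw [snrGain_eq_div hρ hx hy, snr_eq_div hρ hx, snr_eq_div hρ hy]
  field_simp

lemma mul_eq_of_mul_eq_snrGain_sq (hρ : 1 - ρ ^ 2 ≠ 0) (hρ0 : ρ ≠ 0) (hx : x ≠ 0)
    (hy : y ≠ 0) (hP : x + ρ * y ≠ 0) (hQ : y + ρ * x ≠ 0)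
    (h : x * y = snrGain ρ x y ^ 2 / ρ * snr ρ x y * snr ρ y x) :
    (x + ρ * y) * (y + ρ * x) = ρ := by
  rw [snrGain_sq_div_mul_snr_mul_snr hρ hρ0 hx hy, eq_div_iff (mul_ne_zero hP hQ)] at h
  exact mul_left_cancel₀ (mul_ne_zero hx hy) (by linear_combination h)

lemma sqrt_snr_div_one_add_snr (hρ : 1 - ρ ^ 2 ≠ 0) (hy : y ≠ 0) (hP : 0 ≤ x + ρ * y)
    (hQ : y + ρ * x ≠ 0) (hPQ : (x + ρ * y) * (y + ρ * x) = ρ) :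
    √(snr ρ x y / (1 + snr ρ x y)) = x + ρ * y := by
  have hsq : ρ * (x + ρ * y) / (y + ρ * x) = (x + ρ * y) ^ 2 := by
    rw [div_eq_iff hQ]; linear_combination (-(x + ρ * y)) * hPQ
  rw [snr_div_one_add_snr hρ hy hQ, hsq, Real.sqrt_sq hP]

lemma snrGain_mul_snr_div (hρ : 1 - ρ ^ 2 ≠ 0) (hx : x ≠ 0) (hy : y ≠ 0)
    (hP : x + ρ * y ≠ 0) (hQ : y + ρ * x ≠ 0) (hPQ : (x + ρ * y) * (y + ρ * x) = ρ) :
    snrGain ρ x y * snr ρ x y / (x + ρ * y) = x := by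
  have hρ0 : ρ ≠ 0 := hPQ ▸ mul_ne_zero hP hQ
  rw [snrGain_eq_div hρ hx hy, hPQ, snr_eq_div hρ hy]
  field_simp

end snr

lemma vecMul_correlation_fin_two (ρ x y : ℝ) :
    vecMul ![x, y] !![1, ρ; ρ, 1] = ![x + ρ * y, y + ρ * x] := by
  ext i; fin_cases i <;> simp [vecMul, dotProduct] <;> ring

theorem stmt7 (ρ μ₁ μ₂ : ℝ) (hρ : 0 < ρ) (hρ1 : ρ < 1)
    (hμ₁ : 0 < μ₁) (hμ₂ : 0 < μ₂)
    (SNR₁ SNR₂ γ a₁ a₂ : ℝ)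
    (hS₁ : SNR₁ = ρ / (1 - ρ ^ 2) * (μ₁ / μ₂ + ρ))
    (hS₂ : SNR₂ = ρ / (1 - ρ ^ 2) * (μ₂ / μ₁ + ρ))
    (hγ : γ = 1 / (1 + SNR₁ + SNR₂))
    (ha₁ : a₁ = Real.sqrt (SNR₁ / (1 + SNR₁)))
    (ha₂ : a₂ = Real.sqrt (SNR₂ / (1 + SNR₂)))
    (K : Matrix (Fin 2) (Fin 2) ℝ) (hK : K = !![1, ρ; ρ, 1])
    (hnorm : μ₁ * μ₂ = γ ^ 2 / ρ * SNR₁ * SNR₂) :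
    Matrix.vecMul ![a₁, a₂] K⁻¹ = ![γ * SNR₁ / a₁, γ * SNR₂ / a₂] ∧
    Matrix.vecMul ![a₁, a₂] K⁻¹ = ![μ₁, μ₂] := by
  replace hS₁ : SNR₁ = snr ρ μ₁ μ₂ := hS₁
  replace hS₂ : SNR₂ = snr ρ μ₂ μ₁ := hS₂
  subst hS₁ hS₂
  replace hγ : γ = snrGain ρ μ₁ μ₂ := hγ
  subst hγ hK
  have hD : 1 - ρ ^ 2 ≠ 0 := by nlinarith
  have hP : 0 < μ₁ + ρ * μ₂ := by positivity
  have hQ : 0 < μ₂ + ρ * μ₁ := by positivity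
  have hPQ := mul_eq_of_mul_eq_snrGain_sq hD hρ.ne' hμ₁.ne' hμ₂.ne' hP.ne' hQ.ne' hnorm
  have hQP : (μ₂ + ρ * μ₁) * (μ₁ + ρ * μ₂) = ρ := by rw [mul_comm, hPQ]
  rw [sqrt_snr_div_one_add_snr hD hμ₂.ne' hP.le hQ.ne' hPQ] at ha₁
  rw [sqrt_snr_div_one_add_snr hD hμ₁.ne' hQ.le hP.ne' hQP] at ha₂
  subst ha₁ ha₂
  have hdet : IsUnit (!![1, ρ; ρ, 1] : Matrix (Fin 2) (Fin 2) ℝ).det := by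
    simpa [det_fin_two_of, ← sq] using hD
  have hμ : vecMul ![μ₁ + ρ * μ₂, μ₂ + ρ * μ₁] !![1, ρ; ρ, 1]⁻¹ = ![μ₁, μ₂] := by
    rw [← vecMul_correlation_fin_two, vecMul_vecMul, mul_nonsing_inv _ hdet, vecMul_one]
  refine ⟨?_, hμ⟩
  rw [hμ, snrGain_mul_snr_div hD hμ₁.ne' hμ₂.ne' hP.ne' hQ.ne' hPQ, snrGain_comm,
    snrGain_mul_snr_div hD hμ₂.ne' hμ₁.ne' hQ.ne' hP.ne' hQP]
end

section
/- Under the setup of the normalized μ-sum problem (0 < ρ < 1, μ₁μ₂ = (γ²/ρ)SNR₁SNR₂ with SNR₁,SNR₂,γ,a₁,a₂ as defined), the quantity 1 - [a₁ a₂]·K_y⁻¹·[a₁, a₂]ᵀ equals γ. -/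
open Matrix

theorem stmt8 (ρ μ₁ μ₂ : ℝ) (hρ : 0 < ρ) (hρ1 : ρ < 1)
    (hμ₁ : 0 < μ₁) (hμ₂ : 0 < μ₂)
    (SNR₁ SNR₂ γ a₁ a₂ : ℝ)
    (hS₁ : SNR₁ = ρ / (1 - ρ ^ 2) * (μ₁ / μ₂ + ρ))
    (hS₂ : SNR₂ = ρ / (1 - ρ ^ 2) * (μ₂ / μ₁ + ρ))
    (hγ : γ = 1 / (1 + SNR₁ + SNR₂))
    (ha₁ : a₁ = Real.sqrt (SNR₁ / (1 + SNR₁)))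
    (ha₂ : a₂ = Real.sqrt (SNR₂ / (1 + SNR₂)))
    (K : Matrix (Fin 2) (Fin 2) ℝ) (hK : K = !![1, ρ; ρ, 1])
    (hnorm : μ₁ * μ₂ = γ ^ 2 / ρ * SNR₁ * SNR₂) :
    1 - ![a₁, a₂] ⬝ᵥ (K⁻¹ *ᵥ ![a₁, a₂]) = γ := by
  have h1ρ : (0:ℝ) < 1 - ρ^2 := by nlinarith
  have hA : 0 < μ₁ + ρ*μ₂ := by positivity
  have hB : 0 < μ₂ + ρ*μ₁ := by positivity
  have hS₁pos : 0 < SNR₁ := by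
    rw [hS₁]; exact mul_pos (div_pos hρ h1ρ) (by positivity)
  have hS₂pos : 0 < SNR₂ := by
    rw [hS₂]; exact mul_pos (div_pos hρ h1ρ) (by positivity)
  have h1S₁ : (0:ℝ) < 1 + SNR₁ := by linarith
  have h1S₂ : (0:ℝ) < 1 + SNR₂ := by linarith
  have e₁ : a₁^2 = SNR₁/(1+SNR₁) := by
    rw [ha₁, Real.sq_sqrt (by positivity)]
  have e₂ : a₂^2 = SNR₂/(1+SNR₂) := by
    rw [ha₂, Real.sq_sqrt (by positivity)]
  have e₁'' : a₁^2 * (1+SNR₁) = SNR₁ := by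
    rw [e₁]; field_simp
  have e₂'' : a₂^2 * (1+SNR₂) = SNR₂ := by
    rw [e₂]; field_simp
  have hS₁' : SNR₁ * ((1-ρ^2)*μ₂) = ρ*(μ₁+ρ*μ₂) := by
    rw [hS₁]; field_simp
  have hS₂' : SNR₂ * ((1-ρ^2)*μ₁) = ρ*(μ₂+ρ*μ₁) := by
    rw [hS₂]; field_simp
  have e₁' : (μ₂ + ρ*μ₁) * a₁^2 = ρ*(μ₁ + ρ*μ₂) := by
    linear_combination ((1-ρ^2)*μ₂)*e₁'' + (1-a₁^2)*hS₁'
  have e₂' : (μ₁ + ρ*μ₂) * a₂^2 = ρ*(μ₂ + ρ*μ₁) := by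
    linear_combination ((1-ρ^2)*μ₁)*e₂'' + (1-a₂^2)*hS₂'
  have ha₁0 : 0 ≤ a₁ := ha₁ ▸ Real.sqrt_nonneg _
  have ha₂0 : 0 ≤ a₂ := ha₂ ▸ Real.sqrt_nonneg _
  have hAB : ((μ₂ + ρ*μ₁) * (μ₁ + ρ*μ₂)) ≠ 0 := by positivity
  have hsq : (a₁*a₂)^2 = ρ^2 := by
    have h : (a₁*a₂)^2 * ((μ₂ + ρ*μ₁) * (μ₁ + ρ*μ₂))
        = ρ^2 * ((μ₂ + ρ*μ₁) * (μ₁ + ρ*μ₂)) := by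
      linear_combination ((μ₁ + ρ*μ₂) * a₂^2) * e₁' + (ρ*(μ₁ + ρ*μ₂)) * e₂'
    exact mul_right_cancel₀ hAB h
  have h12 : a₁ * a₂ = ρ := by
    have hfac : (a₁*a₂ - ρ)*(a₁*a₂ + ρ) = 0 := by linear_combination hsq
    rcases mul_eq_zero.1 hfac with h | h
    · linarith
    · nlinarith [mul_nonneg ha₁0 ha₂0]
  have hγ'' : γ * (1 + SNR₁ + SNR₂) = 1 := by
    rw [hγ]; field_simp
  have γ' : γ * ((μ₁+ρ*μ₂)*(μ₂+ρ*μ₁)) = μ₁*μ₂*(1-ρ^2) := by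
    linear_combination (μ₁*μ₂*(1-ρ^2))*hγ'' - (γ*μ₁)*hS₁' - (γ*μ₂)*hS₂'
  have hKinv : K⁻¹ = !![(1-ρ^2)⁻¹, -ρ/(1-ρ^2); -ρ/(1-ρ^2), (1-ρ^2)⁻¹] := by
    apply Matrix.inv_eq_right_inv
    rw [hK]
    ext i j
    fin_cases i <;> fin_cases j <;>
      simp [Matrix.mul_apply, Fin.sum_univ_two] <;> field_simp <;> ring
  rw [hKinv]
  simp only [Matrix.mulVec, dotProduct, Fin.sum_univ_two,
    Matrix.cons_val_zero, Matrix.cons_val_one, Matrix.head_cons,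
    Matrix.of_apply, Matrix.cons_val', Matrix.head_fin_const, Matrix.empty_val']
  have hABne : ((μ₁+ρ*μ₂)*(μ₂+ρ*μ₁)) ≠ 0 := by positivity
  have hinv : (1-ρ^2) * (1-ρ^2)⁻¹ = 1 := mul_inv_cancel₀ h1ρ.ne'
  refine mul_right_cancel₀ hABne ?_
  linear_combination (-((1-ρ^2)⁻¹*(μ₁+ρ*μ₂)))*e₁' +
    (-((1-ρ^2)⁻¹*(μ₂+ρ*μ₁)))*e₂' +
    (2*ρ*(1-ρ^2)⁻¹*(μ₁+ρ*μ₂)*(μ₂+ρ*μ₁))*h12 + (-1)*γ' +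
    (-((μ₁+ρ*μ₂)*(μ₂+ρ*μ₁) - μ₁*μ₂*(1-ρ^2)))*hinv
end

section
/- Let 0 < ρ < 1, s₁, s₂ > 0, and set SNR₁ = (ρ/(1-ρ²))(√(s₁/s₂) + ρ), SNR₂ = (ρ/(1-ρ²))(√(s₂/s₁) + ρ). Then with ν* = ((1-ρ²)/ρ)·(s₁s₂ + ρ√(s₁s₂)) / (ρ(s₁+s₂) + √(s₁s₂)(1+ρ²)), we have (s_j - 1)/((1-ρ²)(1+SNR_j)) + 1 = ν*·SNR_j for j = 1,2. -/
lemma key9 (ρ a b : ℝ) (hρ : 0 < ρ) (hρ1 : ρ < 1) (ha : 0 < a) (hb : 0 < b) :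
    (a ^ 2 - 1) / ((1 - ρ ^ 2) * (1 + ρ / (1 - ρ ^ 2) * (a / b + ρ))) + 1 =
    (1 - ρ ^ 2) / ρ * ((a ^ 2 * b ^ 2 + ρ * (a * b)) /
      (ρ * (a ^ 2 + b ^ 2) + a * b * (1 + ρ ^ 2))) * (ρ / (1 - ρ ^ 2) * (a / b + ρ)) := by
  have h1 : (0:ℝ) < 1 - ρ ^ 2 := by nlinarith
  have h2 : (0:ℝ) < 1 + ρ / (1 - ρ ^ 2) * (a / b + ρ) := by positivity
  have h3 : (0:ℝ) < ρ * (a ^ 2 + b ^ 2) + a * b * (1 + ρ ^ 2) := by positivity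
  field_simp
  ring

theorem stmt9 (ρ s₁ s₂ : ℝ) (hρ : 0 < ρ) (hρ1 : ρ < 1)
    (hs₁ : 0 < s₁) (hs₂ : 0 < s₂)
    (SNR₁ SNR₂ ν : ℝ)
    (hS₁ : SNR₁ = ρ / (1 - ρ ^ 2) * (Real.sqrt (s₁ / s₂) + ρ))
    (hS₂ : SNR₂ = ρ / (1 - ρ ^ 2) * (Real.sqrt (s₂ / s₁) + ρ))
    (hν : ν = (1 - ρ ^ 2) / ρ * ((s₁ * s₂ + ρ * Real.sqrt (s₁ * s₂)) /
      (ρ * (s₁ + s₂) + Real.sqrt (s₁ * s₂) * (1 + ρ ^ 2)))) :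
    (s₁ - 1) / ((1 - ρ ^ 2) * (1 + SNR₁)) + 1 = ν * SNR₁ ∧
    (s₂ - 1) / ((1 - ρ ^ 2) * (1 + SNR₂)) + 1 = ν * SNR₂ := by
  set a := Real.sqrt s₁ with hadef
  set b := Real.sqrt s₂ with hbdef
  have ha : 0 < a := Real.sqrt_pos.mpr hs₁
  have hb : 0 < b := Real.sqrt_pos.mpr hs₂
  have ha2 : a ^ 2 = s₁ := Real.sq_sqrt hs₁.le
  have hb2 : b ^ 2 = s₂ := Real.sq_sqrt hs₂.le
  have hab : Real.sqrt (s₁ * s₂) = a * b := Real.sqrt_mul hs₁.le s₂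
  have h12 : Real.sqrt (s₁ / s₂) = a / b := Real.sqrt_div hs₁.le s₂
  have h21 : Real.sqrt (s₂ / s₁) = b / a := Real.sqrt_div hs₂.le s₁
  constructor
  · rw [hS₁, hν, h12, hab, ← ha2, ← hb2]
    have := key9 ρ a b hρ hρ1 ha hb
    linarith [this]
  · rw [hS₂, hν, h21, hab, ← ha2, ← hb2]
    have := key9 ρ b a hρ hρ1 hb ha
    calc (b ^ 2 - 1) / ((1 - ρ ^ 2) * (1 + ρ / (1 - ρ ^ 2) * (b / a + ρ))) + 1
        = (1 - ρ ^ 2) / ρ * ((b ^ 2 * a ^ 2 + ρ * (b * a)) /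
            (ρ * (b ^ 2 + a ^ 2) + b * a * (1 + ρ ^ 2))) * (ρ / (1 - ρ ^ 2) * (b / a + ρ)) := this
      _ = (1 - ρ ^ 2) / ρ * ((a ^ 2 * b ^ 2 + ρ * (a * b)) /
            (ρ * (a ^ 2 + b ^ 2) + a * b * (1 + ρ ^ 2))) * (ρ / (1 - ρ ^ 2) * (b / a + ρ)) := by ring_nf
end

section
/- Let μ₁ = (μ₁₁, μ₁₂) and μ₂ = (μ₂₁, μ₂₂) be vectors with nonnegative entries satisfying μ₁₁μ₂₂ - μ₁₂μ₂₁ > 0. Let D̃⁻¹ = [[a, -b], [-b, c]] with a, c > 0, b ≥ 0, ac - b² > 0, and let D⁻¹ = D̃⁻¹ + [[-λ₁, 0], [0, λ₂]] with λ₁, λ₂ ≥ 0 and (a-λ₁)(c+λ₂) - b² > 0. If μ₁ᵀDμ₁ = μ₁ᵀD̃μ₁, then μ₂ᵀDμ₂ ≤ μ₂ᵀD̃μ₂. -/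
open Matrix

private lemma key10 (a b c l₁ l₂ x₁ y₁ x₂ y₂ : ℝ) (ha : 0 < a) (hc : 0 < c) (hb : 0 ≤ b)
    (hdet : 0 < a * c - b ^ 2) (hl₁ : 0 ≤ l₁) (hl₂ : 0 ≤ l₂)
    (hdet' : 0 < (a - l₁) * (c + l₂) - b ^ 2)
    (hx₁ : 0 ≤ x₁) (hy₁ : 0 ≤ y₁) (hx₂ : 0 ≤ x₂) (hy₂ : 0 ≤ y₂)
    (hmono : 0 < x₁ * y₂ - y₁ * x₂)
    (heq : l₂ * (b^2*x₁^2 + 2*a*b*x₁*y₁ + a*(a-l₁)*y₁^2)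
         = l₁ * (c*(c+l₂)*x₁^2 + 2*b*(c+l₂)*x₁*y₁ + b^2*y₁^2)) :
    l₁ * (c*(c+l₂)*x₂^2 + 2*b*(c+l₂)*x₂*y₂ + b^2*y₂^2)
      ≤ l₂ * (b^2*x₂^2 + 2*a*b*x₂*y₂ + a*(a-l₁)*y₂^2) := by
  have hal : 0 < a - l₁ := by nlinarith [sq_nonneg b]
  have hcl : 0 < c + l₂ := by linarith
  have hx₁pos : 0 < x₁ := by nlinarith
  set P₁ := b^2*x₁^2 + 2*a*b*x₁*y₁ + a*(a-l₁)*y₁^2 with hP₁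
  set Q₁ := c*(c+l₂)*x₁^2 + 2*b*(c+l₂)*x₁*y₁ + b^2*y₁^2 with hQ₁
  set P₂ := b^2*x₂^2 + 2*a*b*x₂*y₂ + a*(a-l₁)*y₂^2 with hP₂
  set Q₂ := c*(c+l₂)*x₂^2 + 2*b*(c+l₂)*x₂*y₂ + b^2*y₂^2 with hQ₂
  have hQ₁pos : 0 < Q₁ := by
    have : 0 < c*(c+l₂)*x₁^2 := by positivity
    nlinarith [mul_nonneg (mul_nonneg (mul_nonneg hb hcl.le) hx₁) hy₁, sq_nonneg (b*y₁)]
  have hA : 0 ≤ 2*b*(c+l₂)*(a*c-b^2) := by positivity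
  have hB : 0 ≤ a*(a-l₁)*(c*(c+l₂)) - b^2*b^2 := by nlinarith
  have hC : 0 ≤ 2*a*b*((a-l₁)*(c+l₂)-b^2) := by positivity
  have hfac : P₂*Q₁ - P₁*Q₂
      = (x₁*y₂ - y₁*x₂) * ((2*b*(c+l₂)*(a*c-b^2))*(x₁*x₂)
        + (a*(a-l₁)*(c*(c+l₂)) - b^2*b^2)*(x₁*y₂+x₂*y₁)
        + (2*a*b*((a-l₁)*(c+l₂)-b^2))*(y₁*y₂)) := by
    simp only [hP₁, hQ₁, hP₂, hQ₂]; ring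
  have hS : 0 ≤ P₂*Q₁ - P₁*Q₂ := by
    rw [hfac]
    have h1 : 0 ≤ x₁*x₂ := mul_nonneg hx₁ hx₂
    have h2 : 0 ≤ x₁*y₂+x₂*y₁ := by positivity
    have h3 : 0 ≤ y₁*y₂ := mul_nonneg hy₁ hy₂
    exact mul_nonneg hmono.le (add_nonneg (add_nonneg (mul_nonneg hA h1)
      (mul_nonneg hB h2)) (mul_nonneg hC h3))
  have hmain : 0 ≤ Q₁ * (l₂*P₂ - l₁*Q₂) := by
    have : Q₁ * (l₂*P₂ - l₁*Q₂) = l₂ * (P₂*Q₁ - P₁*Q₂) + Q₂ * (l₂*P₁ - l₁*Q₁) := by ring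
    have h0 : l₂*P₁ - l₁*Q₁ = 0 := by rw [heq]; ring
    rw [this, h0, mul_zero, add_zero]
    exact mul_nonneg hl₂ hS
  have := (mul_nonneg_iff_of_pos_left hQ₁pos).mp hmain
  linarith

theorem stmt10 (a b c l₁ l₂ : ℝ) (ha : 0 < a) (hc : 0 < c) (hb : 0 ≤ b)
    (hdet : 0 < a * c - b ^ 2)
    (hl₁ : 0 ≤ l₁) (hl₂ : 0 ≤ l₂)
    (hdet' : 0 < (a - l₁) * (c + l₂) - b ^ 2)
    (μ₁ μ₂ : Fin 2 → ℝ)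
    (hμ₁ : 0 ≤ μ₁ 0 ∧ 0 ≤ μ₁ 1) (hμ₂ : 0 ≤ μ₂ 0 ∧ 0 ≤ μ₂ 1)
    (hmono : 0 < μ₁ 0 * μ₂ 1 - μ₁ 1 * μ₂ 0)
    (D Dt : Matrix (Fin 2) (Fin 2) ℝ)
    (hDt : Dt = (!![a, -b; -b, c])⁻¹)
    (hD : D = (!![a - l₁, -b; -b, c + l₂])⁻¹)
    (heq : μ₁ ⬝ᵥ (D *ᵥ μ₁) = μ₁ ⬝ᵥ (Dt *ᵥ μ₁)) :
    μ₂ ⬝ᵥ (D *ᵥ μ₂) ≤ μ₂ ⬝ᵥ (Dt *ᵥ μ₂) := by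
  obtain ⟨hx₁, hy₁⟩ := hμ₁
  obtain ⟨hx₂, hy₂⟩ := hμ₂
  have hΔ : (0:ℝ) < a*c - b^2 := hdet
  have hΔ' : (0:ℝ) < (a-l₁)*(c+l₂) - b^2 := hdet'
  have hDt' : Dt = (a*c - b^2)⁻¹ • !![c, b; b, a] := by
    rw [hDt]
    apply Matrix.inv_eq_right_inv
    ext i j
    fin_cases i <;> fin_cases j <;>
      simp [Matrix.mul_apply, Fin.sum_univ_two, Matrix.smul_apply] <;>
      field_simp <;> ring
  have hD' : D = ((a-l₁)*(c+l₂) - b^2)⁻¹ • !![c+l₂, b; b, a-l₁] := by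
    rw [hD]
    apply Matrix.inv_eq_right_inv
    ext i j
    fin_cases i <;> fin_cases j <;>
      simp [Matrix.mul_apply, Fin.sum_univ_two, Matrix.smul_apply] <;>
      field_simp <;> ring
  have form : ∀ μ : Fin 2 → ℝ,
      μ ⬝ᵥ (Dt *ᵥ μ) = (c*(μ 0)^2 + 2*b*(μ 0)*(μ 1) + a*(μ 1)^2) / (a*c - b^2) := by
    intro μ
    rw [hDt']
    simp [mulVec, dotProduct, Fin.sum_univ_two, Matrix.smul_apply, div_eq_mul_inv]
    ring
  have form' : ∀ μ : Fin 2 → ℝ,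
      μ ⬝ᵥ (D *ᵥ μ) = ((c+l₂)*(μ 0)^2 + 2*b*(μ 0)*(μ 1) + (a-l₁)*(μ 1)^2)
        / ((a-l₁)*(c+l₂) - b^2) := by
    intro μ
    rw [hD']
    simp [mulVec, dotProduct, Fin.sum_univ_two, Matrix.smul_apply, div_eq_mul_inv]
    ring
  rw [form, form'] at heq ⊢
  rw [div_le_div_iff₀ hΔ' hΔ]
  rw [div_eq_div_iff hΔ'.ne' hΔ.ne'] at heq
  have hk : l₂ * (b^2*(μ₁ 0)^2 + 2*a*b*(μ₁ 0)*(μ₁ 1) + a*(a-l₁)*(μ₁ 1)^2)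
      = l₁ * (c*(c+l₂)*(μ₁ 0)^2 + 2*b*(c+l₂)*(μ₁ 0)*(μ₁ 1) + b^2*(μ₁ 1)^2) := by
    linear_combination -heq
  have hkey := key10 a b c l₁ l₂ (μ₁ 0) (μ₁ 1) (μ₂ 0) (μ₂ 1) ha hc hb hdet hl₁ hl₂ hdet'
    hx₁ hy₁ hx₂ hy₂ hmono hk
  have hr : (c * μ₂ 0 ^ 2 + 2 * b * μ₂ 0 * μ₂ 1 + a * μ₂ 1 ^ 2) * ((a - l₁) * (c + l₂) - b ^ 2)
      - ((c + l₂) * μ₂ 0 ^ 2 + 2 * b * μ₂ 0 * μ₂ 1 + (a - l₁) * μ₂ 1 ^ 2) * (a * c - b ^ 2)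
      = l₂ * (b^2*(μ₂ 0)^2 + 2*a*b*(μ₂ 0)*(μ₂ 1) + a*(a-l₁)*(μ₂ 1)^2)
        - l₁ * (c*(c+l₂)*(μ₂ 0)^2 + 2*b*(c+l₂)*(μ₂ 0)*(μ₂ 1) + b^2*(μ₂ 1)^2) := by ring
  linarith
end

section
/- Let D* be a 2×2 positive definite matrix with positive entries, written D* = [[d₁*, θ*√(d₁*d₂*)], [θ*√(d₁*d₂*), d₂*]] with 0 < θ* < 1, and let μ_i, μ_j be unit vectors with nonnegative entries such that det[μ_i μ_j] > 0. Define D̃ = [[(μ_iᵀD*e₁)², (μ_jᵀD*e₁)²], [(μ_iᵀD*e₂)², (μ_jᵀD*e₂)²]]. Then det D̃ > 0. -/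
open Matrix

set_option maxHeartbeats 1000000 in
theorem stmt11 (d₁ d₂ θ : ℝ) (hd₁ : 0 < d₁) (hd₂ : 0 < d₂)
    (hθ : θ ∈ Set.Ioo (0 : ℝ) 1)
    (Dstar : Matrix (Fin 2) (Fin 2) ℝ)
    (hDstar : Dstar = !![d₁, θ * Real.sqrt (d₁ * d₂); θ * Real.sqrt (d₁ * d₂), d₂])
    (hpd : Dstar.PosDef)
    (μi μj : Fin 2 → ℝ)
    (hμi : 0 ≤ μi 0 ∧ 0 ≤ μi 1) (hμj : 0 ≤ μj 0 ∧ 0 ≤ μj 1)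
    (hμinorm : (μi 0) ^ 2 + (μi 1) ^ 2 = 1) (hμjnorm : (μj 0) ^ 2 + (μj 1) ^ 2 = 1)
    (hdet : 0 < μi 0 * μj 1 - μi 1 * μj 0)
    (Dt : Matrix (Fin 2) (Fin 2) ℝ)
    (hDt : Dt = !![((Dstar *ᵥ μi) 0) ^ 2, ((Dstar *ᵥ μj) 0) ^ 2;
                   ((Dstar *ᵥ μi) 1) ^ 2, ((Dstar *ᵥ μj) 1) ^ 2]) :
    0 < Dt.det := by
  obtain ⟨hθ0, hθ1⟩ := hθ
  set s := θ * Real.sqrt (d₁ * d₂) with hs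
  have hsqrt : 0 < Real.sqrt (d₁ * d₂) := Real.sqrt_pos.mpr (by positivity)
  have hspos : 0 < s := by positivity
  have hs2 : s ^ 2 = θ ^ 2 * (d₁ * d₂) := by
    rw [mul_pow, Real.sq_sqrt (by positivity : (0:ℝ) ≤ d₁ * d₂)]
  have hslt : s ^ 2 < d₁ * d₂ := by
    rw [hs2]
    nlinarith [mul_pos hd₁ hd₂, mul_pos (by linarith : (0:ℝ) < 1 - θ) (by linarith : (0:ℝ) < 1 + θ)]
  clear_value s
  clear hs hsqrt hs2
  subst hDstar hDt
  clear hpd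
  rw [Matrix.det_fin_two_of]
  simp [Matrix.mulVec, dotProduct, Fin.sum_univ_two]
  have hipos : 0 < μi 0 ∨ 0 < μi 1 := by
    by_contra h; push_neg at h; obtain ⟨h0, h1⟩ := h
    have e0 : μi 0 = 0 := le_antisymm h0 hμi.1
    have e1 : μi 1 = 0 := le_antisymm h1 hμi.2
    rw [e0, e1] at hμinorm; norm_num at hμinorm
  have hjpos : 0 < μj 0 ∨ 0 < μj 1 := by
    by_contra h; push_neg at h; obtain ⟨h0, h1⟩ := h
    have e0 : μj 0 = 0 := le_antisymm h0 hμj.1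
    have e1 : μj 1 = 0 := le_antisymm h1 hμj.2
    rw [e0, e1] at hμjnorm; norm_num at hμjnorm
  have hai : 0 < d₁ * μi 0 + s * μi 1 := by
    rcases hipos with h | h
    · nlinarith [mul_nonneg hspos.le hμi.2]
    · nlinarith [mul_nonneg hd₁.le hμi.1]
  have hbi : 0 < s * μi 0 + d₂ * μi 1 := by
    rcases hipos with h | h
    · nlinarith [mul_nonneg hd₂.le hμi.2]
    · nlinarith [mul_nonneg hspos.le hμi.1]
  have haj : 0 < d₁ * μj 0 + s * μj 1 := by
    rcases hjpos with h | h
    · nlinarith [mul_nonneg hspos.le hμj.2]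
    · nlinarith [mul_nonneg hd₁.le hμj.1]
  have hbj : 0 < s * μj 0 + d₂ * μj 1 := by
    rcases hjpos with h | h
    · nlinarith [mul_nonneg hd₂.le hμj.2]
    · nlinarith [mul_nonneg hspos.le hμj.1]
  have pos1 : 0 < (d₁ * μi 0 + s * μi 1) * (s * μj 0 + d₂ * μj 1)
      - (d₁ * μj 0 + s * μj 1) * (s * μi 0 + d₂ * μi 1) := by
    have : (d₁ * μi 0 + s * μi 1) * (s * μj 0 + d₂ * μj 1)
        - (d₁ * μj 0 + s * μj 1) * (s * μi 0 + d₂ * μi 1)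
        = (d₁ * d₂ - s ^ 2) * (μi 0 * μj 1 - μi 1 * μj 0) := by ring
    rw [this]; exact mul_pos (by linarith) hdet
  have pos2 : 0 < (d₁ * μi 0 + s * μi 1) * (s * μj 0 + d₂ * μj 1)
      + (d₁ * μj 0 + s * μj 1) * (s * μi 0 + d₂ * μi 1) :=
    add_pos (mul_pos hai hbj) (mul_pos haj hbi)
  nlinarith [mul_pos pos1 pos2]
end
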